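/- 𝒪 is seminormal if and only if the conductor 𝔣 is a squarefree ideal of 𝒪_K, i.e. no square of a nonzero prime ideal of 𝒪_K divides 𝔣. -/

import Mathlib

open NumberField

set_option synthInstance.maxHeartbeats 1000000
set_option maxHeartbeats 1000000

variable {K : Type*} [Field K] [NumberField K]

/-- A subring `O ⊆ 𝓞 K` is an *order* in `K` if its field of fractions is `K`;
equivalently, every element of `𝓞 K` admits a nonzero integer multiple lying in `O`. -/
def Subring.IsOrder (O : Subring (𝓞 K)) : Prop :=
  ∀ x : 𝓞 K, ∃ n : ℤ, n ≠ 0 ∧ (n : 𝓞 K) * x ∈ O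

/-- The conductor `𝔣 = {x ∈ 𝓞 K : x • 𝓞 K ⊆ O}` of a subring `O ⊆ 𝓞 K`,
as an ideal of `𝓞 K`. -/
def conductorIdeal (O : Subring (𝓞 K)) : Ideal (𝓞 K) where
  carrier := {x : 𝓞 K | ∀ y : 𝓞 K, x * y ∈ O}
  add_mem' := by
    intro a b ha hb y
    simpa [add_mul] using O.add_mem (ha y) (hb y)
  zero_mem' := by
    intro y
    simpa using O.zero_mem
  smul_mem' := by
    intro c x hx y
    simpa [smul_eq_mul, mul_assoc, mul_comm, mul_left_comm] using hx (c * y)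

/-- A commutative ring is *half-factorial* if every nonzero nonunit is a product of
irreducible elements, and any two factorizations of a nonzero nonunit into irreducibles
have the same length. -/
def IsHalfFactorialRing (R : Type*) [CommRing R] : Prop :=
  (∀ a : R, a ≠ 0 → ¬ IsUnit a →
      ∃ l : Multiset R, (∀ b ∈ l, Irreducible b) ∧ l.prod = a) ∧
  (∀ a : R, a ≠ 0 → ¬ IsUnit a →
      ∀ l₁ l₂ : Multiset R, (∀ b ∈ l₁, Irreducible b) → (∀ b ∈ l₂, Irreducible b) →
        l₁.prod = a → l₂.prod = a → Multiset.card l₁ = Multiset.card l₂)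

/-- The spec-map `𝔓 ↦ 𝔓 ∩ 𝒪` is a bijection between the nonzero prime ideals of `𝓞 K`
and the nonzero prime ideals of `O`. -/
def SpecMapBijective (O : Subring (𝓞 K)) : Prop :=
  Set.BijOn (fun P : Ideal (𝓞 K) => P.comap O.subtype)
    {P : Ideal (𝓞 K) | P.IsPrime ∧ P ≠ ⊥} {p : Ideal O | p.IsPrime ∧ p ≠ ⊥}

/-- The localization `𝒪_𝔭` of `O` at a prime ideal `𝔭` of `O`, realized as a subring
of `K`. -/
def locO (O : Subring (𝓞 K)) (p : Ideal O) (hp : p.IsPrime) : Subring K where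
  carrier := {x : K | ∃ a s : O, s ∉ p ∧
    x * algebraMap (𝓞 K) K (s : 𝓞 K) = algebraMap (𝓞 K) K (a : 𝓞 K)}
  one_mem' := ⟨1, 1, fun h => hp.ne_top ((Ideal.eq_top_iff_one _).mpr h), by simp⟩
  zero_mem' := ⟨0, 1, fun h => hp.ne_top ((Ideal.eq_top_iff_one _).mpr h), by simp⟩
  mul_mem' := by
    rintro x y ⟨a, s, hs, hx⟩ ⟨b, t, ht, hy⟩
    refine ⟨a * b, s * t, fun h => ((hp.mem_or_mem h).elim hs ht), ?_⟩
    push_cast [map_mul]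
    calc x * y * (algebraMap (𝓞 K) K s * algebraMap (𝓞 K) K t)
        = (x * algebraMap (𝓞 K) K s) * (y * algebraMap (𝓞 K) K t) := by ring
      _ = _ := by rw [hx, hy]
  add_mem' := by
    rintro x y ⟨a, s, hs, hx⟩ ⟨b, t, ht, hy⟩
    refine ⟨a * t + b * s, s * t, fun h => ((hp.mem_or_mem h).elim hs ht), ?_⟩
    push_cast [map_mul, map_add]
    calc (x + y) * (algebraMap (𝓞 K) K s * algebraMap (𝓞 K) K t)
        = (x * algebraMap (𝓞 K) K s) * algebraMap (𝓞 K) K t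
          + (y * algebraMap (𝓞 K) K t) * algebraMap (𝓞 K) K s := by ring
      _ = _ := by rw [hx, hy]
  neg_mem' := by
    rintro x ⟨a, s, hs, hx⟩
    exact ⟨-a, s, hs, by push_cast [map_neg]; rw [neg_mul, hx]⟩

/-- The localization `(𝒪_K)_𝔭 = 𝒪_K · (𝒪 ∖ 𝔭)⁻¹` of `𝓞 K` at the prime ideal `𝔭` of `O`
(the integral closure of `𝒪_𝔭`), realized as a subring of `K`. -/
def locOK (O : Subring (𝓞 K)) (p : Ideal O) (hp : p.IsPrime) : Subring K where
  carrier := {x : K | ∃ (a : 𝓞 K) (s : O), s ∉ p ∧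
    x * algebraMap (𝓞 K) K (s : 𝓞 K) = algebraMap (𝓞 K) K a}
  one_mem' := ⟨1, 1, fun h => hp.ne_top ((Ideal.eq_top_iff_one _).mpr h), by simp⟩
  zero_mem' := ⟨0, 1, fun h => hp.ne_top ((Ideal.eq_top_iff_one _).mpr h), by simp⟩
  mul_mem' := by
    rintro x y ⟨a, s, hs, hx⟩ ⟨b, t, ht, hy⟩
    refine ⟨a * b, s * t, fun h => ((hp.mem_or_mem h).elim hs ht), ?_⟩
    push_cast [map_mul]
    calc x * y * (algebraMap (𝓞 K) K s * algebraMap (𝓞 K) K t)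
        = (x * algebraMap (𝓞 K) K s) * (y * algebraMap (𝓞 K) K t) := by ring
      _ = _ := by rw [hx, hy]
  add_mem' := by
    rintro x y ⟨a, s, hs, hx⟩ ⟨b, t, ht, hy⟩
    refine ⟨a * t + b * s, s * t, fun h => ((hp.mem_or_mem h).elim hs ht), ?_⟩
    push_cast [map_mul, map_add]
    calc (x + y) * (algebraMap (𝓞 K) K s * algebraMap (𝓞 K) K t)
        = (x * algebraMap (𝓞 K) K s) * algebraMap (𝓞 K) K t
          + (y * algebraMap (𝓞 K) K t) * algebraMap (𝓞 K) K s := by ring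
      _ = _ := by rw [hx, hy]
  neg_mem' := by
    rintro x ⟨a, s, hs, hx⟩
    exact ⟨-a, s, hs, by push_cast [map_neg]; rw [neg_mul, hx]⟩

lemma locO_le_locOK (O : Subring (𝓞 K)) (p : Ideal O) (hp : p.IsPrime) :
    locO O p hp ≤ locOK O p hp := by
  rintro x ⟨a, s, hs, hx⟩
  exact ⟨(a : 𝓞 K), s, hs, hx⟩

/-- The subring `O + I` of `𝓞 K`, for a subring `O` and an ideal `I` of `𝓞 K`. -/
def orderPlus (O : Subring (𝓞 K)) (I : Ideal (𝓞 K)) : Subring (𝓞 K) where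
  carrier := {x : 𝓞 K | ∃ a ∈ O, ∃ b ∈ I, x = a + b}
  one_mem' := ⟨1, O.one_mem, 0, I.zero_mem, by ring⟩
  zero_mem' := ⟨0, O.zero_mem, 0, I.zero_mem, by ring⟩
  mul_mem' := by
    rintro x y ⟨a, ha, b, hb, rfl⟩ ⟨c, hc, d, hd, rfl⟩
    refine ⟨a * c, O.mul_mem ha hc, a * d + b * c + b * d,
      I.add_mem (I.add_mem (I.mul_mem_left a hd) (I.mul_mem_right c hb)) (I.mul_mem_left b hd), by ring⟩
  add_mem' := by
    rintro x y ⟨a, ha, b, hb, rfl⟩ ⟨c, hc, d, hd, rfl⟩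
    exact ⟨a + c, O.add_mem ha hc, b + d, I.add_mem hb hd, by ring⟩
  neg_mem' := by
    rintro x ⟨a, ha, b, hb, rfl⟩
    exact ⟨-a, O.neg_mem ha, -b, I.neg_mem hb, by ring⟩

lemma le_orderPlus (O : Subring (𝓞 K)) (I : Ideal (𝓞 K)) : O ≤ orderPlus O I :=
  fun a ha => ⟨a, ha, 0, I.zero_mem, by ring⟩

/-- The order `ℤ + f·𝒪_K` in `K`. -/
def zOrder (f : ℕ) : Subring (𝓞 K) where
  carrier := {x : 𝓞 K | ∃ (a : ℤ) (b : 𝓞 K), x = (a : 𝓞 K) + (f : 𝓞 K) * b}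
  one_mem' := ⟨1, 0, by push_cast; ring⟩
  zero_mem' := ⟨0, 0, by push_cast; ring⟩
  mul_mem' := by
    rintro x y ⟨a, b, rfl⟩ ⟨c, d, rfl⟩
    exact ⟨a * c, (a : 𝓞 K) * d + (c : 𝓞 K) * b + (f : 𝓞 K) * b * d, by push_cast; ring⟩
  add_mem' := by
    rintro x y ⟨a, b, rfl⟩ ⟨c, d, rfl⟩
    exact ⟨a + c, b + d, by push_cast; ring⟩
  neg_mem' := by
    rintro x ⟨a, b, rfl⟩
    exact ⟨-a, -b, by push_cast; ring⟩

/-- The natural homomorphism `𝒪_K^× → (𝒪_K/𝔣)^×/(𝒪/𝔣)^×`: reduction modulo the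
conductor `𝔣`, followed by the quotient by (the image of) `(𝒪/𝔣)^×`. -/
noncomputable def unitClassMap (O : Subring (𝓞 K)) :
    (𝓞 K)ˣ →*
      ((𝓞 K ⧸ conductorIdeal O)ˣ ⧸
        (Units.map (Subring.map (Ideal.Quotient.mk (conductorIdeal O)) O).subtype.toMonoidHom).range) :=
  (QuotientGroup.mk' _).comp (Units.map (Ideal.Quotient.mk (conductorIdeal O)).toMonoidHom)

/-! Seminormality of `O` is equivalent to radicality of its conductor `𝔣`. One direction is direct:
if `x ^ n ∈ 𝔣` then `(x * y) ^ m ∈ O` for all `m ≥ n` and all `y`. For the other, `𝒪_K / 𝔣` is a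
finite reduced ring, in which every element satisfies `x ^ (k * d + 1) = x`; so `x ≡ x ^ n (mod 𝔣)`
for arbitrarily large `n`, and `𝔣 ⊆ O`. In the Dedekind domain `𝒪_K`, a nonzero ideal is radical
exactly when it is squarefree. -/

def Subring.IsSeminormal {A : Type*} [CommRing A] (O : Subring A) : Prop :=
  ∀ x : A, (∃ N : ℕ, ∀ n ≥ N, x ^ n ∈ O) → x ∈ O

theorem exists_pow_mul_add_one_eq_self {R : Type*} [CommRing R] [Finite R] [IsReduced R] (x : R) :
    ∃ d ≠ 0, ∀ k : ℕ, x ^ (k * d + 1) = x := by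
  obtain ⟨a, b, hab, h⟩ := Finite.exists_ne_map_eq_of_infinite (x ^ · : ℕ → R)
  wlog hlt : a < b generalizing a b
  · exact this b a hab.symm h.symm (by omega)
  obtain ⟨d, rfl⟩ := Nat.exists_eq_add_of_lt hlt
  have hnil : IsNilpotent (x - x ^ (d + 1 + 1)) := by
    refine ⟨a + 1, ?_⟩
    calc (x - x ^ (d + 1 + 1)) ^ (a + 1)
        = (x ^ a - x ^ (a + d + 1)) * (x * (1 - x ^ (d + 1)) ^ a) := by
          rw [show x - x ^ (d + 1 + 1) = x * (1 - x ^ (d + 1)) by ring, mul_pow]; ring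
      _ = 0 := by rw [h, sub_self, zero_mul]
  have hx : x ^ (d + 1 + 1) = x := (sub_eq_zero.mp (IsReduced.eq_zero _ hnil)).symm
  refine ⟨d + 1, d.succ_ne_zero, fun k => ?_⟩
  induction k with
  | zero => simp
  | succ k ih => rw [add_mul, one_mul, add_right_comm, pow_add, ih, ← pow_succ', hx]

theorem Subring.IsSeminormal.of_isRadical {A : Type*} [CommRing A] {O : Subring A} {I : Ideal A}
    [Finite (A ⧸ I)] (hI : I.IsRadical) (hIO : ∀ x ∈ I, x ∈ O) : O.IsSeminormal := by
  rintro x ⟨N, hN⟩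
  have : IsReduced (A ⧸ I) := (Ideal.isRadical_iff_quotient_reduced I).mp hI
  obtain ⟨d, hd, hpow⟩ := exists_pow_mul_add_one_eq_self (Ideal.Quotient.mk I x)
  have hmem : x - x ^ (N * d + 1) ∈ I := by
    rw [← Ideal.Quotient.eq_zero_iff_mem, map_sub, map_pow, hpow, sub_self]
  have hle : N ≤ N * d + 1 := by nlinarith [Nat.one_le_iff_ne_zero.mpr hd]
  simpa using O.add_mem (hIO _ hmem) (hN _ hle)

theorem isRadical_iff_ideal_isRadical {R : Type*} [CommRing R] [IsDedekindDomain R]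
    {I : Ideal R} : IsRadical I ↔ I.IsRadical := by
  refine ⟨fun h x ⟨n, hn⟩ => ?_, fun h n J hJ => ?_⟩
  · exact Ideal.dvd_span_singleton.mp
      (h n _ (by rwa [Ideal.span_singleton_pow, Ideal.dvd_span_singleton]))
  · rw [Ideal.dvd_iff_le] at hJ ⊢
    exact fun x hx => h ⟨n, hJ (Ideal.pow_mem_pow hx n)⟩

theorem Ideal.isRadical_iff_forall_isPrime_not_sq_dvd {R : Type*} [CommRing R]
    [IsDedekindDomain R] {I : Ideal R} (hI : I ≠ ⊥) :
    I.IsRadical ↔ ∀ P : Ideal R, P.IsPrime → P ≠ ⊥ → ¬ P ^ 2 ∣ I := by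
  rw [← isRadical_iff_ideal_isRadical, isRadical_iff_squarefree_of_ne_zero hI,
    squarefree_iff_no_irreducibles hI]
  refine ⟨fun h P hP hP0 => ?_, fun h P hP => ?_⟩
  · rw [sq]
    exact h P (prime_of_isPrime hP0 hP).irreducible
  · rw [← sq]
    exact h P (isPrime_of_prime hP.prime) hP.ne_zero

theorem mem_of_mem_conductorIdeal {F : Type*} [Field F] {O : Subring (𝓞 F)} {x : 𝓞 F}
    (hx : x ∈ conductorIdeal O) : x ∈ O := by
  simpa using hx 1

theorem Subring.IsSeminormal.conductorIdeal_isRadical {F : Type*} [Field F] {O : Subring (𝓞 F)}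
    (h : O.IsSeminormal) : (conductorIdeal O).IsRadical := by
  rintro x ⟨n, hn⟩ y
  refine h _ ⟨n, fun m hm => ?_⟩
  have hsplit : (x * y) ^ m = x ^ n * (x ^ (m - n) * y ^ m) := by
    rw [mul_pow, ← mul_assoc, ← pow_add, Nat.add_sub_cancel' hm]
  exact hsplit ▸ hn _

theorem conductorIdeal_ne_bot {O : Subring (𝓞 K)} (hO : O.IsOrder) : conductorIdeal O ≠ ⊥ := by
  let N : Submodule ℤ (𝓞 K) := AddSubgroup.toIntSubmodule O.toAddSubgroup
  have htors : Module.IsTorsion ℤ (𝓞 K ⧸ N) := by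
    rintro ⟨y⟩
    obtain ⟨n, hn, hny⟩ := hO y
    exact ⟨⟨n, mem_nonZeroDivisors_of_ne_zero hn⟩,
      (Submodule.Quotient.mk_eq_zero N).2 (by show n • y ∈ N; rw [zsmul_eq_mul]; exact hny)⟩
  -- `𝒪_K / O` is a finitely generated torsion group, so a single integer `n ≠ 0` kills it
  obtain ⟨n, hann, hn⟩ := Submodule.annihilator_top_inter_nonZeroDivisors htors
  refine Submodule.ne_bot_iff _ |>.mpr ⟨n, fun y => ?_, ?_⟩
  · have := Submodule.mem_annihilator.mp hann (Submodule.Quotient.mk y) trivial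
    rw [← Submodule.Quotient.mk_smul, Submodule.Quotient.mk_eq_zero, zsmul_eq_mul] at this
    exact this
  · exact_mod_cast nonZeroDivisors.coe_ne_zero ⟨n, hn⟩

theorem isSeminormal_iff_conductorIdeal_isRadical {O : Subring (𝓞 K)} (hO : O.IsOrder) :
    O.IsSeminormal ↔ (conductorIdeal O).IsRadical := by
  have := Ideal.finiteQuotientOfFreeOfNeBot _ (conductorIdeal_ne_bot hO)
  exact ⟨Subring.IsSeminormal.conductorIdeal_isRadical,
    fun h => .of_isRadical h fun _ => mem_of_mem_conductorIdeal⟩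

/-- **Proposition 4.5.** `𝒪` is seminormal if and only if its conductor is a squarefree
ideal of `𝒪_K`. -/
theorem seminormal_iff_conductor_squarefree (O : Subring (𝓞 K)) (hO : O.IsOrder) :
    (¬ ∃ x : 𝓞 K, x ∉ O ∧ ∃ N : ℕ, ∀ n ≥ N, x ^ n ∈ O) ↔
      ∀ P : Ideal (𝓞 K), P.IsPrime → P ≠ ⊥ → ¬ P ^ 2 ∣ conductorIdeal O := by
  rw [← Ideal.isRadical_iff_forall_isPrime_not_sq_dvd (conductorIdeal_ne_bot hO),
    ← isSeminormal_iff_conductorIdeal_isRadical hO, Subring.IsSeminormal]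
  exact not_exists.trans <| forall_congr' fun _ => not_and.trans not_imp_not
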